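/- Let Q = (0,1)^N be the open unit cube in ℝ^N and A, B two N×N real matrices. Let u : ℝ^N → ℝ^N be continuous on the closed cube [0,1]^N, differentiable at every point of Q with derivative Du(x), with x ↦ Du(x) Lebesgue integrable on Q, u(x) = Ax for every x ∈ ∂Q, and ∫_Q Du(x) dx = B. Then tr B = tr A. Consequently, if tr(A − B) ≠ 0 there exists no jump-free (everywhere differentiable) competitor with affine boundary values Ax and average gradient B: disarrangements are necessary to realize such a structured deformation. -/

import Mathlib

/-!
The field `v x = u x - A x` is continuous on the closed cube, differentiable inside with
derivative `Du x - A`, and vanishes on `∂Q`. The divergence theorem therefore gives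
`∫_Q tr (Du x - A) dx = 0`. Since the trace is a continuous linear functional it commutes with
the integral, so `∫_Q tr (Du x) dx = tr (∫_Q Du) = tr B`, while `∫_Q tr A dx = tr A` because
`|Q| = 1`.
-/

open MeasureTheory

/-- The open unit cube `(0,1)^N` in `ℝ^N`. -/
def openCube (N : ℕ) : Set (Fin N → ℝ) := Set.univ.pi fun _ => Set.Ioo (0 : ℝ) 1

/-- A jump-free competitor in the cell formula: `u` is continuous on the closed unit
cube, differentiable everywhere on the open cube `Q = (0,1)^N` with derivative `Du`
integrable on `Q`, has affine boundary values `u = Ax` on `∂Q`, and average gradient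
`∫_Q Du = B`. -/
def IsJumpFreeCompetitor (N : ℕ) (A B : Matrix (Fin N) (Fin N) ℝ)
    (u : (Fin N → ℝ) → Fin N → ℝ)
    (Du : (Fin N → ℝ) → ((Fin N → ℝ) →L[ℝ] (Fin N → ℝ))) : Prop :=
  ContinuousOn u (Set.Icc (0 : Fin N → ℝ) 1) ∧
  (∀ x ∈ openCube N, HasFDerivAt u (Du x) x) ∧
  IntegrableOn Du (openCube N) ∧
  (∀ x ∈ frontier (openCube N), u x = A.mulVec x) ∧
  ∫ x in openCube N, Du x = LinearMap.toContinuousLinearMap (Matrix.mulVecLin B)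

open Set

lemma LinearMap.trace_pi_eq_sum {R ι : Type*} [CommRing R] [Fintype ι] [DecidableEq ι]
    (f : (ι → R) →ₗ[R] ι → R) : LinearMap.trace R (ι → R) f = ∑ i, f (Pi.single i 1) i := by
  rw [LinearMap.trace_eq_matrix_trace R (Pi.basisFun R ι), LinearMap.toMatrix_eq_toMatrix']
  simp [Matrix.trace, LinearMap.toMatrix'_apply]

noncomputable def traceCLM (𝕜 E : Type*) [NontriviallyNormedField 𝕜] [CompleteSpace 𝕜]
    [NormedAddCommGroup E] [NormedSpace 𝕜 E] [FiniteDimensional 𝕜 E] : (E →L[𝕜] E) →L[𝕜] 𝕜 :=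
  LinearMap.toContinuousLinearMap (LinearMap.trace 𝕜 E ∘ₗ ContinuousLinearMap.coeLM 𝕜)

lemma traceCLM_toContinuousLinearMap_mulVecLin {ι : Type*} [Fintype ι] [DecidableEq ι]
    (A : Matrix ι ι ℝ) :
    traceCLM ℝ (ι → ℝ) (LinearMap.toContinuousLinearMap A.mulVecLin) = A.trace :=
  Matrix.trace_toLin'_eq A

lemma insertNth_mem_Icc_diff_pi_Ioo {n : ℕ} {a b : Fin (n + 1) → ℝ} (hle : a ≤ b)
    (i : Fin (n + 1)) {c : ℝ} (hc : c = a i ∨ c = b i) {x : Fin n → ℝ}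
    (hx : x ∈ Icc (a ∘ i.succAbove) (b ∘ i.succAbove)) :
    i.insertNth c x ∈ Icc a b \ univ.pi fun j => Ioo (a j) (b j) := by
  refine ⟨Fin.insertNth_mem_Icc.2 ⟨?_, hx⟩, fun hmem => ?_⟩
  · rcases hc with rfl | rfl
    exacts [⟨le_rfl, hle i⟩, ⟨hle i, le_rfl⟩]
  · have := hmem i (mem_univ i)
    rw [Fin.insertNth_apply_same] at this
    rcases hc with rfl | rfl
    exacts [this.1.false, this.2.false]

theorem integral_divergence_eq_zero_of_eqOn_boundary {n : ℕ} {E : Type*}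
    [NormedAddCommGroup E] [NormedSpace ℝ E] [CompleteSpace E]
    {a b : Fin (n + 1) → ℝ} (hle : a ≤ b) {f : (Fin (n + 1) → ℝ) → Fin (n + 1) → E}
    {f' : (Fin (n + 1) → ℝ) → (Fin (n + 1) → ℝ) →L[ℝ] Fin (n + 1) → E}
    (hf : ContinuousOn f (Icc a b))
    (hf' : ∀ x ∈ univ.pi fun i => Ioo (a i) (b i), HasFDerivAt f (f' x) x)
    (hdiv : IntegrableOn (fun x => ∑ i, f' x (Pi.single i 1) i) (Icc a b))
    (hzero : EqOn f 0 (Icc a b \ univ.pi fun i => Ioo (a i) (b i))) :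
    ∫ x in Icc a b, ∑ i, f' x (Pi.single i 1) i = 0 := by
  rw [integral_divergence_of_hasFDerivAt_off_countable a b hle f f' ∅ countable_empty hf
    (fun x hx => hf' x hx.1) hdiv]
  refine Finset.sum_eq_zero fun i _ => ?_
  have hface : ∀ c, c = a i ∨ c = b i →
      ∫ x in Icc (a ∘ i.succAbove) (b ∘ i.succAbove), f (i.insertNth c x) i = 0 := by
    intro c hc
    refine setIntegral_eq_zero_of_forall_eq_zero fun x hx => ?_
    rw [hzero (insertNth_mem_Icc_diff_pi_Ioo hle i hc hx), Pi.zero_apply, Pi.zero_apply]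
  rw [hface _ (Or.inr rfl), hface _ (Or.inl rfl), sub_zero]

lemma volume_Icc_zero_one (N : ℕ) : volume (Icc (0 : Fin N → ℝ) 1) = 1 := by
  simp [Real.volume_Icc_pi]

lemma openCube_ae_eq_Icc (N : ℕ) : openCube N =ᵐ[volume] Icc (0 : Fin N → ℝ) 1 := by
  refine ae_eq_of_subset_of_measure_ge ?_ ?_ ?_ (by simp [volume_Icc_zero_one])
  · rw [← pi_univ_Icc]
    exact pi_mono fun _ _ => Ioo_subset_Icc_self
  · rw [volume_Icc_zero_one, openCube, volume_pi_pi]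
    simp
  · exact (MeasurableSet.univ_pi fun _ => measurableSet_Ioo).nullMeasurableSet

lemma frontier_openCube (N : ℕ) : frontier (openCube N) = Icc 0 1 \ openCube N := by
  have hopen : IsOpen (openCube N) := isOpen_set_pi finite_univ fun _ _ => isOpen_Ioo
  rw [hopen.frontier_eq, openCube, closure_pi_set, ← pi_univ_Icc]
  simp [closure_Ioo zero_ne_one]

lemma IsJumpFreeCompetitor.trace_eq {n : ℕ} {A B : Matrix (Fin (n + 1)) (Fin (n + 1)) ℝ}
    {u : (Fin (n + 1) → ℝ) → Fin (n + 1) → ℝ}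
    {Du : (Fin (n + 1) → ℝ) → (Fin (n + 1) → ℝ) →L[ℝ] Fin (n + 1) → ℝ}
    (h : IsJumpFreeCompetitor (n + 1) A B u Du) : B.trace = A.trace := by
  obtain ⟨hcont, hderiv, hint, hbdry, havg⟩ := h
  set LA := LinearMap.toContinuousLinearMap A.mulVecLin
  set τ := traceCLM ℝ (Fin (n + 1) → ℝ)
  have hτint : IntegrableOn (fun x => τ (Du x)) (Icc 0 1) := by
    rw [IntegrableOn, ← Measure.restrict_congr_set (openCube_ae_eq_Icc _)]
    exact τ.integrable_comp hint
  have hτavg : ∫ x in Icc 0 1, τ (Du x) = B.trace := by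
    rw [← setIntegral_congr_set (openCube_ae_eq_Icc _), τ.integral_comp_comm hint, havg]
    exact traceCLM_toContinuousLinearMap_mulVecLin B
  have hconst : IntegrableOn (fun _ => A.trace) (Icc (0 : Fin (n + 1) → ℝ) 1) :=
    integrableOn_const (by simp [volume_Icc_zero_one])
  have hdiv : ∀ x, τ (Du x) - A.trace = ∑ i, (Du x - LA) (Pi.single i 1) i := fun x => by
    rw [← traceCLM_toContinuousLinearMap_mulVecLin A, ← map_sub]
    exact LinearMap.trace_pi_eq_sum _
  have hzero : ∫ x in Icc 0 1, (τ (Du x) - A.trace) = 0 := by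
    simp only [hdiv]
    refine integral_divergence_eq_zero_of_eqOn_boundary (f := fun x => u x - LA x)
      zero_le_one (hcont.sub LA.continuous.continuousOn)
      (fun x hx => (hderiv x hx).sub LA.hasFDerivAt) ?_ ?_
    · simp only [← hdiv]
      exact hτint.sub hconst
    · intro x hx
      rw [Pi.zero_apply, sub_eq_zero, hbdry x (by rwa [frontier_openCube])]
      rfl
  rw [integral_sub hτint hconst, hτavg, setIntegral_const, measureReal_def,
    volume_Icc_zero_one] at hzero
  simpa [sub_eq_zero] using hzero

theorem trace_eq_of_jumpFreeCompetitor_general (N : ℕ)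
    (A B : Matrix (Fin N) (Fin N) ℝ) :
    (∀ (u : (Fin N → ℝ) → Fin N → ℝ)
        (Du : (Fin N → ℝ) → ((Fin N → ℝ) →L[ℝ] (Fin N → ℝ))),
      IsJumpFreeCompetitor N A B u Du → B.trace = A.trace) ∧
    (Matrix.trace (A - B) ≠ 0 →
      ¬ ∃ (u : (Fin N → ℝ) → Fin N → ℝ)
          (Du : (Fin N → ℝ) → ((Fin N → ℝ) →L[ℝ] (Fin N → ℝ))),
        IsJumpFreeCompetitor N A B u Du) := by
  have htrace : ∀ u Du, IsJumpFreeCompetitor N A B u Du → B.trace = A.trace := by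
    rcases N with _ | n
    · simp
    · exact fun u Du h => h.trace_eq
  refine ⟨htrace, fun htr ⟨u, Du, h⟩ => htr ?_⟩
  rw [Matrix.trace_sub, htrace u Du h, sub_self]

/-- Any jump-free competitor with boundary values `Ax` and average gradient `B`
satisfies `tr B = tr A`; consequently, if `tr(A − B) ≠ 0` no jump-free competitor
exists: disarrangements are necessary. -/
theorem trace_eq_of_jumpFreeCompetitor (N : ℕ) (hN : 1 ≤ N)
    (A B : Matrix (Fin N) (Fin N) ℝ) :
    (∀ (u : (Fin N → ℝ) → Fin N → ℝ)
        (Du : (Fin N → ℝ) → ((Fin N → ℝ) →L[ℝ] (Fin N → ℝ))),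
      IsJumpFreeCompetitor N A B u Du → B.trace = A.trace) ∧
    (Matrix.trace (A - B) ≠ 0 →
      ¬ ∃ (u : (Fin N → ℝ) → Fin N → ℝ)
          (Du : (Fin N → ℝ) → ((Fin N → ℝ) →L[ℝ] (Fin N → ℝ))),
        IsJumpFreeCompetitor N A B u Du) :=
  trace_eq_of_jumpFreeCompetitor_general N A B
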